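/- For every integer a and every nonnegative integer k, the polynomial (q^a z_1 z_2; q)_k ∈ ℚ(q)[z_1,z_2] is a ℤ[q^{±1}]-linear combination of the polynomials ((q;q)_k/((q;q)_{k_1}(q;q)_{k_2}))·(z_1;q)_{k_1}·(z_2;q)_{k_2} with k_1 ≤ k and k_2 ≤ k. -/

import Mathlib

/-!
Apply the `q`-Chu–Vandermonde identity `(xy;q)_n = ∑_j [n,j]_q x^{n-j} (x;q)_j (y;q)_{n-j}` twice:
first with `x = z₁`, `y = q^a z₂`, then with `x = q^a`, `y = z₂`. The powers of `z₁` left over are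
absorbed by `z (z;q)_r = q^{-r} ((z;q)_r - (z;q)_{r+1})`. The resulting coefficient of
`(z₁;q)_r (z₂;q)_l` is `(q;q)_k / ((q;q)_r (q;q)_l)` times `(q;q)_r / (q;q)_j` (with `j ≤ r`) and
`(q^a;q)_i / (q;q)_i`, and both are Laurent polynomials; for the second, the recursion
`(q^a;q)_{r+1}/(q;q)_{r+1} = (q^a;q)_r/(q;q)_r + q^{r+1} (q^{a-1};q)_{r+1}/(q;q)_{r+1}`
runs through all integers `a` starting from `a = 0`.
-/

noncomputable section

/-- The field `ℚ(q)` of rational functions in `q` over `ℚ`. -/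
abbrev Kq := RatFunc ℚ

/-- The variable `q` viewed inside `ℚ(q)`. -/
def qK : Kq := RatFunc.X

/-- `ℤ[q^{±1}]` regarded as a subring of `ℚ(q)`: the subring generated by `q` and `q⁻¹`. -/
def ZLaurent : Subring Kq := Subring.closure {qK, qK⁻¹}

/-- `(q;q)_m = ∏_{t=0}^{m-1} (1 - q^{t+1})` in `ℚ(q)`. -/
def qPochK (m : ℕ) : Kq := ∏ t ∈ Finset.range m, (1 - qK ^ (t + 1))

/-- `(z;q)_m = ∏_{t=0}^{m-1} (1 - q^t z)` for a variable `z` of `ℚ(q)[z_1,z_2]`. -/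
def zPoch (i : Fin 2) (m : ℕ) : MvPolynomial (Fin 2) Kq :=
  ∏ t ∈ Finset.range m, (1 - MvPolynomial.C (qK ^ t) * MvPolynomial.X i)

open Finset

section QAnalogues

variable {R S : Type*}

/-- `qPoch q x m` is `(x;q)_m`. -/
def qPoch [CommRing R] (q x : R) (m : ℕ) : R := ∏ t ∈ range m, (1 - q ^ t * x)

def qBinom [Semiring R] (q : R) : ℕ → ℕ → R
  | _, 0 => 1
  | 0, _ + 1 => 0
  | n + 1, j + 1 => q ^ (j + 1) * qBinom q n (j + 1) + qBinom q n j

section Semiring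
variable [Semiring R] (q : R)

@[simp] lemma qBinom_zero_right (n : ℕ) : qBinom q n 0 = 1 := by cases n <;> rfl

lemma qBinom_succ_succ (n j : ℕ) :
    qBinom q (n + 1) (j + 1) = q ^ (j + 1) * qBinom q n (j + 1) + qBinom q n j := rfl

lemma qBinom_eq_zero_of_lt {n j : ℕ} (h : n < j) : qBinom q n j = 0 := by
  induction n generalizing j with
  | zero => obtain ⟨j, rfl⟩ := Nat.exists_eq_succ_of_ne_zero h.ne'; rfl
  | succ n ih =>
    obtain ⟨j, rfl⟩ := Nat.exists_eq_succ_of_ne_zero (Nat.ne_zero_of_lt h)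
    rw [qBinom_succ_succ, ih (by omega), ih (by omega), mul_zero, add_zero]

@[simp] lemma qBinom_self (n : ℕ) : qBinom q n n = 1 := by
  induction n with
  | zero => rfl
  | succ n ih =>
    rw [qBinom_succ_succ, qBinom_eq_zero_of_lt q n.lt_succ_self, ih, mul_zero, zero_add]

lemma map_qBinom [Semiring S] (f : R →+* S) (n j : ℕ) : f (qBinom q n j) = qBinom (f q) n j := by
  induction n generalizing j with
  | zero => cases j <;> simp [qBinom]
  | succ n ih => cases j <;> simp [qBinom_succ_succ, ih]

/-- The `q`-analogue of `Finset.sum_choose_succ_mul`. -/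
lemma sum_range_qBinom_succ_mul (f : ℕ → ℕ → R) (n : ℕ) :
    ∑ i ∈ range (n + 2), qBinom q (n + 1) i * f i (n + 1 - i) =
      ∑ i ∈ range (n + 1), q ^ i * qBinom q n i * f i (n + 1 - i) +
        ∑ i ∈ range (n + 1), qBinom q n i * f (i + 1) (n - i) := by
  have hlast : ∑ i ∈ range (n + 1), q ^ (i + 1) * qBinom q n (i + 1) * f (i + 1) (n - i) =
      ∑ i ∈ range n, q ^ (i + 1) * qBinom q n (i + 1) * f (i + 1) (n - i) := by
    rw [sum_range_succ, qBinom_eq_zero_of_lt q n.lt_succ_self, mul_zero, zero_mul, add_zero]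
  rw [sum_range_succ', sum_range_succ' (fun i => q ^ i * _ * _)]
  simp only [qBinom_succ_succ, add_mul, sum_add_distrib, qBinom_zero_right, pow_zero, one_mul,
    Nat.succ_sub_succ, Nat.sub_zero, hlast]
  abel

end Semiring

section CommRing
variable [CommRing R] (q : R)

lemma qPoch_succ (x : R) (m : ℕ) : qPoch q x (m + 1) = qPoch q x m * (1 - q ^ m * x) :=
  prod_range_succ _ _

@[simp] lemma qPoch_zero (x : R) : qPoch q x 0 = 1 := prod_range_zero _

lemma qPoch_succ' (x : R) (m : ℕ) : qPoch q x (m + 1) = (1 - x) * qPoch q (q * x) m := by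
  rw [qPoch, qPoch, prod_range_succ', pow_zero, one_mul, mul_comm]
  simp only [pow_succ, mul_assoc, mul_left_comm]

lemma map_qPoch [CommRing S] (f : R →+* S) (x : R) (m : ℕ) :
    f (qPoch q x m) = qPoch (f q) (f x) m := by
  simp [qPoch, map_prod]

lemma qPoch_sub_qPoch_succ (x : R) (m : ℕ) :
    qPoch q x m - qPoch q x (m + 1) = q ^ m * x * qPoch q x m := by
  rw [qPoch_succ]; ring

lemma qPoch_mul_succ (y : R) (r : ℕ) :
    qPoch q (q * y) (r + 1) =
      (1 - q ^ (r + 1)) * qPoch q (q * y) r + q ^ (r + 1) * qPoch q y (r + 1) := by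
  rw [qPoch_succ, qPoch_succ']; ring

lemma qBinom_mul_qPoch_mul_qPoch (i j : ℕ) :
    qBinom q (i + j) j * qPoch q q j * qPoch q q i = qPoch q q (i + j) := by
  induction j generalizing i with
  | zero => simp
  | succ j ihj =>
    induction i with
    | zero => simp
    | succ i ihi =>
      have hj := ihj (i + 1)
      rw [show i + 1 + j = i + (j + 1) by omega] at hj
      rw [show i + 1 + (j + 1) = i + (j + 1) + 1 by omega, qBinom_succ_succ,
        qPoch_succ q q (i + (j + 1))]
      simp only [qPoch_succ] at ihi hj ⊢
      linear_combination (q ^ (j + 1) * (1 - q ^ i * q)) * ihi + (1 - q ^ j * q) * hj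

theorem qPoch_mul_eq_sum (a b : R) (n : ℕ) :
    qPoch q (a * b) n =
      ∑ j ∈ range (n + 1), qBinom q n j * (a ^ (n - j) * qPoch q a j * qPoch q b (n - j)) := by
  induction n with
  | zero => simp
  | succ n ih =>
    rw [qPoch_succ, ih, sum_mul,
      sum_range_qBinom_succ_mul q (fun j m => a ^ m * qPoch q a j * qPoch q b m), ← sum_add_distrib]
    refine sum_congr rfl fun j hj => ?_
    obtain ⟨m, rfl⟩ := Nat.exists_eq_add_of_le (mem_range_succ_iff.mp hj)
    simp only [Nat.add_sub_cancel_left, show j + m + 1 - j = m + 1 by omega, qPoch_succ, pow_add]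
    ring

end CommRing
end QAnalogues

lemma qK_ne_zero : qK ≠ 0 := RatFunc.X_ne_zero

open Polynomial in
lemma one_sub_qK_pow_ne_zero {s : ℕ} (hs : s ≠ 0) : 1 - qK ^ s ≠ 0 := by
  rw [sub_ne_zero, ne_comm, qK, ← RatFunc.algebraMap_X, ← map_pow, ← map_one (algebraMap ℚ[X] _),
    (RatFunc.algebraMap_injective ℚ).ne_iff]
  intro h
  simpa [hs] using congrArg natDegree h

lemma qPochK_succ (m : ℕ) : qPochK (m + 1) = qPochK m * (1 - qK ^ (m + 1)) := prod_range_succ _ _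

lemma qPochK_ne_zero (m : ℕ) : qPochK m ≠ 0 :=
  prod_ne_zero_iff.mpr fun t _ => one_sub_qK_pow_ne_zero t.succ_ne_zero

lemma qPochK_eq_qPoch (m : ℕ) : qPochK m = qPoch qK qK m :=
  prod_congr rfl fun t _ => by rw [pow_succ]

lemma qBinom_qK_eq_div (i j : ℕ) :
    qBinom qK (i + j) j = qPochK (i + j) / (qPochK j * qPochK i) := by
  rw [eq_div_iff (mul_ne_zero (qPochK_ne_zero j) (qPochK_ne_zero i)), ← mul_assoc]
  simp only [qPochK_eq_qPoch]
  exact qBinom_mul_qPoch_mul_qPoch qK i j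

lemma qBinom_mul_qBinom_eq (r : ℕ) {j i l : ℕ} :
    qBinom qK (j + (i + l)) j * qBinom qK (i + l) i =
      qPochK r / qPochK j * (qPochK i)⁻¹ *
        (qPochK (j + (i + l)) * ((qPochK r)⁻¹ * (qPochK l)⁻¹)) := by
  have := qPochK_ne_zero j
  have := qPochK_ne_zero l
  have := qPochK_ne_zero r
  have := qPochK_ne_zero (i + l)
  rw [add_comm j, qBinom_qK_eq_div, add_comm i l, qBinom_qK_eq_div, add_comm l i,
    add_comm (i + l) j]
  field_simp

lemma qK_zpow_mem (n : ℤ) : qK ^ n ∈ ZLaurent := by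
  have hq : qK ∈ ZLaurent := Subring.subset_closure (by simp)
  have hq' : qK⁻¹ ∈ ZLaurent := Subring.subset_closure (by simp)
  cases n with
  | ofNat m => simpa using pow_mem hq m
  | negSucc m => simpa [zpow_negSucc, ← inv_pow] using pow_mem hq' (m + 1)

lemma qK_pow_mem (s : ℕ) : qK ^ s ∈ ZLaurent := by simpa using qK_zpow_mem s

lemma one_sub_qK_pow_mem (s : ℕ) : 1 - qK ^ s ∈ ZLaurent := sub_mem (one_mem _) (qK_pow_mem s)

lemma qPochK_div_mem {i r : ℕ} (h : i ≤ r) : qPochK r / qPochK i ∈ ZLaurent := by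
  obtain ⟨d, rfl⟩ := Nat.exists_eq_add_of_le h
  induction d with
  | zero => simp [div_self (qPochK_ne_zero i), one_mem]
  | succ d ih =>
    rw [← add_assoc, qPochK_succ, mul_div_right_comm]
    exact mul_mem (ih (by omega)) (one_sub_qK_pow_mem _)

lemma qPoch_zpow_div_qPochK_succ (α : ℤ) (r : ℕ) :
    qPoch qK (qK ^ α) (r + 1) / qPochK (r + 1) =
      qPoch qK (qK ^ α) r / qPochK r +
        qK ^ (r + 1) * (qPoch qK (qK ^ (α - 1)) (r + 1) / qPochK (r + 1)) := by
  have h := qPoch_mul_succ qK (qK ^ (α - 1)) r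
  rw [← zpow_one_add₀ qK_ne_zero, add_sub_cancel] at h
  have := qPochK_ne_zero r
  have := one_sub_qK_pow_ne_zero r.succ_ne_zero
  rw [qPochK_succ]
  field_simp
  linear_combination h

lemma qPoch_zpow_div_qPochK_mem (α : ℤ) (r : ℕ) : qPoch qK (qK ^ α) r / qPochK r ∈ ZLaurent := by
  induction r generalizing α with
  | zero => simp [qPochK, one_mem]
  | succ r ih =>
    induction α using Int.induction_on with
    | zero => simp [qPoch_succ', zero_mem]
    | succ n hn =>
      rw [qPoch_zpow_div_qPochK_succ, add_sub_cancel_right]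
      exact add_mem (ih _) (mul_mem (qK_pow_mem _) hn)
    | pred n hn =>
      have h := qPoch_zpow_div_qPochK_succ (-n) r
      have hq := pow_ne_zero (r + 1) qK_ne_zero
      rw [show qPoch qK (qK ^ (-(n : ℤ) - 1)) (r + 1) / qPochK (r + 1) =
          qK ^ (-((r : ℤ) + 1)) * (qPoch qK (qK ^ (-(n : ℤ))) (r + 1) / qPochK (r + 1) -
            qPoch qK (qK ^ (-(n : ℤ))) r / qPochK r) by
        rw [h, zpow_neg, ← Nat.cast_succ, zpow_natCast]; field_simp; ring]
      exact mul_mem (qK_zpow_mem _) (sub_mem hn (ih _))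

lemma exists_finsupp_of_mem_span_image {K M ι : Type*} [Ring K] [AddCommMonoid M] [Module K M]
    {S : Subring K} {v : ι → M} {s : Set ι} {p : M} (hp : p ∈ Submodule.span S (v '' s)) :
    ∃ c : ι →₀ K, (∀ i, c i ∈ S) ∧ (∀ i ∈ c.support, i ∈ s) ∧ p = c.sum fun i b => b • v i := by
  obtain ⟨l, hls, rfl⟩ := (Finsupp.mem_span_image_iff_linearCombination S).mp hp
  refine ⟨l.mapRange Subtype.val rfl, fun i => (l i).2,
    fun i hi => hls (Finsupp.support_mapRange hi), ?_⟩
  rw [Finsupp.linearCombination_apply, Finsupp.sum_mapRange_index fun i => zero_smul K (v i)]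
  rfl

lemma pow_mul_qPoch_mem_span {A : Type*} [CommRing A] [Algebra Kq A] (x : A) (n j : ℕ) :
    x ^ n * qPoch (algebraMap Kq A qK) x j ∈
      Submodule.span ZLaurent (qPoch (algebraMap Kq A qK) x '' Set.Icc j (j + n)) := by
  set P := qPoch (algebraMap Kq A qK) x
  induction n generalizing j with
  | zero => exact Submodule.subset_span ⟨j, by simp, by simp⟩
  | succ n ih =>
    have hx : x * P j = qK ^ (-(j : ℤ)) • (P j - P (j + 1)) := by
      rw [qPoch_sub_qPoch_succ, Algebra.smul_def, ← map_pow, ← mul_assoc, ← mul_assoc, ← map_mul,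
        zpow_neg, zpow_natCast, inv_mul_cancel₀ (pow_ne_zero _ qK_ne_zero), map_one, one_mul]
    have hmono : Set.Icc j (j + n) ∪ Set.Icc (j + 1) (j + 1 + n) ⊆ Set.Icc j (j + (n + 1)) := by
      rintro r (⟨h1, h2⟩ | ⟨h1, h2⟩) <;> constructor <;> omega
    rw [pow_succ, mul_assoc, hx, mul_smul_comm, mul_sub]
    refine Submodule.smul_mem _ (⟨_, qK_zpow_mem _⟩ : ZLaurent) (sub_mem ?_ ?_) <;>
      refine Submodule.span_mono (Set.image_mono (subset_trans ?_ hmono)) (ih _)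
    exacts [Set.subset_union_left, Set.subset_union_right]

lemma qPoch_mul_mul_eq_sum {R : Type*} [CommRing R] (q c x y : R) (k : ℕ) :
    qPoch q (x * (c * y)) k =
      ∑ j ∈ range (k + 1), ∑ i ∈ range (k - j + 1),
        qBinom q k j * qBinom q (k - j) i * c ^ (k - j - i) * qPoch q c i *
          (x ^ (k - j) * qPoch q x j) * qPoch q y (k - j - i) := by
  rw [qPoch_mul_eq_sum]
  refine sum_congr rfl fun j _ => ?_
  rw [qPoch_mul_eq_sum, mul_sum, mul_sum]
  refine sum_congr rfl fun i _ => ?_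
  ring

open MvPolynomial

lemma zPoch_eq_qPoch (i : Fin 2) : zPoch i = qPoch (C qK) (X i) :=
  funext fun m => prod_congr rfl fun t _ => by rw [map_pow]

def zBasis (k : ℕ) (k' : Fin 2 → ℕ) : MvPolynomial (Fin 2) Kq :=
  C (qPochK k * ((qPochK (k' 0))⁻¹ * (qPochK (k' 1))⁻¹)) * (zPoch 0 (k' 0) * zPoch 1 (k' 1))

def zSpan (k : ℕ) : Submodule ZLaurent (MvPolynomial (Fin 2) Kq) :=
  Submodule.span ZLaurent (zBasis k '' {k' | k' 0 ≤ k ∧ k' 1 ≤ k})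

lemma C_mul_zPoch_mul_zPoch_mem_zSpan {k r l : ℕ} (hr : r ≤ k) (hl : l ≤ k) {b : Kq}
    (hb : b ∈ ZLaurent) :
    C (b * (qPochK k * ((qPochK r)⁻¹ * (qPochK l)⁻¹))) * (zPoch 0 r * zPoch 1 l) ∈ zSpan k := by
  have h := Submodule.smul_mem (zSpan k) (⟨b, hb⟩ : ZLaurent)
    (Submodule.subset_span ⟨![r, l], ⟨hr, hl⟩, rfl⟩)
  simpa [zBasis, Subring.smul_def, smul_eq_C_mul, mul_assoc] using h

lemma prod_one_sub_C_zpow_mul_X_mul_X_eq_sum (a : ℤ) (k : ℕ) :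
    ∏ t ∈ range k, (1 - C (qK ^ (a + (t : ℤ))) * (X 0 * X 1) : MvPolynomial (Fin 2) Kq) =
      ∑ j ∈ range (k + 1), ∑ i ∈ range (k - j + 1),
        C (qBinom qK k j * qBinom qK (k - j) i * (qK ^ a) ^ (k - j - i) * qPoch qK (qK ^ a) i) *
          (X 0 ^ (k - j) * zPoch 0 j) * zPoch 1 (k - j - i) := by
  have hprod :
      ∏ t ∈ range k, (1 - C (qK ^ (a + (t : ℤ))) * (X 0 * X 1) : MvPolynomial (Fin 2) Kq) =
        qPoch (C qK) (X 0 * (C (qK ^ a) * X 1)) k :=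
    prod_congr rfl fun t _ => by
      rw [zpow_add₀ qK_ne_zero, zpow_natCast, map_mul, map_pow]; ring
  rw [hprod, qPoch_mul_mul_eq_sum]
  simp only [zPoch_eq_qPoch, ← map_qBinom, ← map_qPoch, ← map_pow, ← map_mul]

lemma C_mul_X_pow_mul_zPoch_mul_zPoch_mem_zSpan (a : ℤ) {k j i : ℕ} (hj : j ≤ k) (hi : i ≤ k - j) :
    C (qBinom qK k j * qBinom qK (k - j) i * (qK ^ a) ^ (k - j - i) * qPoch qK (qK ^ a) i) *
      (X 0 ^ (k - j) * zPoch 0 j) * zPoch 1 (k - j - i) ∈ zSpan k := by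
  obtain ⟨m, rfl⟩ := Nat.exists_eq_add_of_le hj
  rw [Nat.add_sub_cancel_left] at hi ⊢
  obtain ⟨l, rfl⟩ := Nat.exists_eq_add_of_le hi
  rw [Nat.add_sub_cancel_left]
  set γ := qBinom qK (j + (i + l)) j * qBinom qK (i + l) i * (qK ^ a) ^ l * qPoch qK (qK ^ a) i
  have hspan := pow_mul_qPoch_mem_span (X 0 : MvPolynomial (Fin 2) Kq) (i + l) j
  rw [algebraMap_eq, ← zPoch_eq_qPoch] at hspan
  have hle : Submodule.span ZLaurent (zPoch 0 '' Set.Icc j (j + (i + l))) ≤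
      (zSpan (j + (i + l))).comap
        ((LinearMap.mulRight ZLaurent (zPoch 1 l)).comp (LinearMap.mulLeft ZLaurent (C γ))) := by
    rw [Submodule.span_le]
    rintro _ ⟨r, ⟨hjr, hrk⟩, rfl⟩
    have hcoef : γ = ((qK ^ a) ^ l * (qPochK r / qPochK j) * (qPoch qK (qK ^ a) i / qPochK i)) *
        (qPochK (j + (i + l)) * ((qPochK r)⁻¹ * (qPochK l)⁻¹)) := by
      simp only [γ]; rw [qBinom_mul_qBinom_eq r]; ring
    have hb := mul_mem (mul_mem (pow_mem (qK_zpow_mem a) l) (qPochK_div_mem hjr))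
      (qPoch_zpow_div_qPochK_mem a i)
    have h := C_mul_zPoch_mul_zPoch_mem_zSpan (l := l) hrk (by omega) hb
    rw [← hcoef, ← mul_assoc] at h
    simpa only [SetLike.mem_coe, Submodule.mem_comap, LinearMap.comp_apply, LinearMap.mulLeft_apply,
      LinearMap.mulRight_apply] using h
  have h := hle hspan
  rwa [Submodule.mem_comap, LinearMap.comp_apply, LinearMap.mulLeft_apply,
    LinearMap.mulRight_apply] at h

/-- `(q^a z_1 z_2;q)_k` is a `ℤ[q^{±1}]`-linear combination of the polynomials
`((q;q)_k/((q;q)_{k_1}(q;q)_{k_2}))·(z_1;q)_{k_1}(z_2;q)_{k_2}` with `k_1, k_2 ≤ k`. -/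
theorem stmt_6 (a : ℤ) (k : ℕ) :
    ∃ c : (Fin 2 → ℕ) →₀ Kq, (∀ k', c k' ∈ ZLaurent) ∧
      (∀ k' ∈ c.support, k' 0 ≤ k ∧ k' 1 ≤ k) ∧
      (∏ t ∈ Finset.range k,
          (1 - MvPolynomial.C (qK ^ (a + (t : ℤ))) * (MvPolynomial.X 0 * MvPolynomial.X 1))) =
        c.sum fun k' b =>
          MvPolynomial.C (b * (qPochK k * ((qPochK (k' 0))⁻¹ * (qPochK (k' 1))⁻¹))) *
            (zPoch 0 (k' 0) * zPoch 1 (k' 1)) := by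
  have hmem : ∏ t ∈ range k, (1 - C (qK ^ (a + (t : ℤ))) * (X 0 * X 1)) ∈ zSpan k := by
    rw [prod_one_sub_C_zpow_mul_X_mul_X_eq_sum]
    exact sum_mem fun j hj => sum_mem fun i hi =>
      C_mul_X_pow_mul_zPoch_mul_zPoch_mem_zSpan a (mem_range_succ_iff.mp hj)
        (mem_range_succ_iff.mp hi)
  obtain ⟨c, hc, hsupp, hsum⟩ := exists_finsupp_of_mem_span_image hmem
  refine ⟨c, hc, hsupp, hsum.trans (Finsupp.sum_congr fun k' _ => ?_)⟩
  rw [zBasis, smul_eq_C_mul, ← mul_assoc, ← map_mul]
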